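/- An m-th order n-dimensional real tensor A is an R0-tensor if and only if for every a ∈ ℝ^n with Sol(A,a) ≠ ∅, the solution map Sol is upper semicontinuous at (A,a): for every open set V ⊆ ℝ^n with Sol(A,a) ⊆ V there exists an open neighborhood U of (A,a) in ℝ^{[m,n]} × ℝ^n such that Sol(B,b) ⊆ V for all (B,b) ∈ U. -/

import Mathlib

set_option maxHeartbeats 1600000


open Finset MeasureTheory Pointwise

/-- For a tensor `A` of order `k+1` and dimension `n` (entries `A i j` = `a_{i, j 0, …, j (k-1)}`),
`tApply A x` is the vector `A x^{k}` with `i`-th component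
`∑_{i_2,…,i_{k+1}} a_{i i_2 ⋯ i_{k+1}} x_{i_2} ⋯ x_{i_{k+1}}`. -/
noncomputable def tApply {n k : ℕ} (A : Fin n → (Fin k → Fin n) → ℝ) (x : Fin n → ℝ) :
    Fin n → ℝ :=
  fun i => ∑ j : Fin k → Fin n, A i j * ∏ l : Fin k, x (j l)

/-- The solution set of the tensor complementarity problem `TCP(A,a)`. -/
def Sol {n k : ℕ} (A : Fin n → (Fin k → Fin n) → ℝ) (a : Fin n → ℝ) : Set (Fin n → ℝ) :=
  {x | (∀ i, 0 ≤ x i) ∧ (∀ i, 0 ≤ tApply A x i + a i) ∧ ∑ i, x i * (tApply A x i + a i) = 0}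

/-- `A` is an R₀-tensor if `Sol(A,0) = {0}`. -/
def IsR0 {n k : ℕ} (A : Fin n → (Fin k → Fin n) → ℝ) : Prop := Sol A 0 = {0}

/-- Frobenius norm of a tensor. -/
noncomputable def tNorm {n k : ℕ} (A : Fin n → (Fin k → Fin n) → ℝ) : ℝ :=
  Real.sqrt (∑ i, ∑ j, (A i j) ^ 2)

/-- Euclidean norm of a vector in ℝⁿ. -/
noncomputable def eNorm {n : ℕ} (x : Fin n → ℝ) : ℝ := Real.sqrt (∑ i, (x i) ^ 2)

lemma mem_Sol {n k : ℕ} {A : Fin n → (Fin k → Fin n) → ℝ} {a x : Fin n → ℝ} :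
    x ∈ Sol A a ↔ (∀ i, 0 ≤ x i) ∧ (∀ i, 0 ≤ tApply A x i + a i) ∧
      ∑ i, x i * (tApply A x i + a i) = 0 := Iff.rfl

lemma tApply_smul {n k : ℕ} (A : Fin n → (Fin k → Fin n) → ℝ) (c : ℝ) (x : Fin n → ℝ) :
    tApply A (c • x) = c ^ k • tApply A x := by
  funext i
  simp only [tApply, Pi.smul_apply, smul_eq_mul, Finset.mul_sum]
  refine Finset.sum_congr rfl fun j _ => ?_
  rw [Finset.prod_mul_distrib, Finset.prod_const, Finset.card_univ, Fintype.card_fin]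
  ring

lemma tApply_cont {n k : ℕ} :
    Continuous fun p : (Fin n → (Fin k → Fin n) → ℝ) × (Fin n → ℝ) => tApply p.1 p.2 := by
  apply continuous_pi
  intro i
  show Continuous fun p : (Fin n → (Fin k → Fin n) → ℝ) × (Fin n → ℝ) =>
    ∑ j : Fin k → Fin n, p.1 i j * ∏ l : Fin k, p.2 (j l)
  refine continuous_finset_sum
    (f := fun (j : Fin k → Fin n) (p : (Fin n → (Fin k → Fin n) → ℝ) × (Fin n → ℝ)) =>
      p.1 i j * ∏ l : Fin k, p.2 (j l)) Finset.univ (fun j _ => ?_)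
  have h1 : Continuous fun p : (Fin n → (Fin k → Fin n) → ℝ) × (Fin n → ℝ) => p.1 i j :=
    (continuous_apply j).comp ((continuous_apply i).comp continuous_fst)
  have h2 : Continuous fun p : (Fin n → (Fin k → Fin n) → ℝ) × (Fin n → ℝ) =>
      ∏ l : Fin k, p.2 (j l) :=
    continuous_finset_prod
      (f := fun (l : Fin k) (p : (Fin n → (Fin k → Fin n) → ℝ) × (Fin n → ℝ)) => p.2 (j l))
      Finset.univ (fun l _ => (continuous_apply (j l)).comp continuous_snd)
  exact h1.mul h2

lemma tApply_zero {n k : ℕ} (hk : k ≠ 0) (A : Fin n → (Fin k → Fin n) → ℝ) :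
    tApply A 0 = 0 := by
  funext i
  simp only [tApply, Pi.zero_apply]
  apply Finset.sum_eq_zero
  intro j _
  rw [Finset.prod_eq_zero (Finset.mem_univ (⟨0, Nat.pos_of_ne_zero hk⟩ : Fin k)) rfl, mul_zero]

lemma tApply_add_smul {n k : ℕ} (A C : Fin n → (Fin k → Fin n) → ℝ) (ε : ℝ) (x : Fin n → ℝ) :
    tApply (fun i j => A i j + ε * C i j) x = fun i => tApply A x i + ε * tApply C x i := by
  funext i
  simp only [tApply, Finset.mul_sum, ← Finset.sum_add_distrib]
  refine Finset.sum_congr rfl fun j _ => ?_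
  ring

lemma Sol_scale {n k : ℕ} {B : Fin n → (Fin k → Fin n) → ℝ} {b x : Fin n → ℝ}
    (hx : x ∈ Sol B b) {ε : ℝ} (hε : 0 ≤ ε) : ε • x ∈ Sol B (ε ^ k • b) := by
  rw [mem_Sol] at hx ⊢
  obtain ⟨h1, h2, h3⟩ := hx
  have key : ∀ i, tApply B (ε • x) i + (ε ^ k • b) i = ε ^ k * (tApply B x i + b i) := by
    intro i
    rw [tApply_smul]
    simp only [Pi.smul_apply, smul_eq_mul]
    ring
  refine ⟨fun i => mul_nonneg hε (h1 i), fun i => ?_, ?_⟩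
  · rw [key]; exact mul_nonneg (pow_nonneg hε k) (h2 i)
  · have term : ∀ i, (ε • x) i * (tApply B (ε • x) i + (ε ^ k • b) i)
        = ε ^ (k + 1) * (x i * (tApply B x i + b i)) := by
      intro i
      rw [key i]
      simp only [Pi.smul_apply, smul_eq_mul]
      ring
    rw [Finset.sum_congr rfl fun i _ => term i, ← Finset.mul_sum, h3, mul_zero]

set_option maxHeartbeats 1000000 in
lemma Sol_limit {n k : ℕ} {Bs : ℕ → Fin n → (Fin k → Fin n) → ℝ} {bs xs : ℕ → Fin n → ℝ}
    {A : Fin n → (Fin k → Fin n) → ℝ} {a x : Fin n → ℝ}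
    (hB : Filter.Tendsto Bs Filter.atTop (nhds A)) (hb : Filter.Tendsto bs Filter.atTop (nhds a))
    (hx : Filter.Tendsto xs Filter.atTop (nhds x))
    (hsol : ∀ j, xs j ∈ Sol (Bs j) (bs j)) : x ∈ Sol A a := by
  have htA : Filter.Tendsto (fun j => tApply (Bs j) (xs j)) Filter.atTop (nhds (tApply A x)) :=
    (tApply_cont.tendsto (A, x)).comp (hB.prodMk_nhds hx)
  have hti : ∀ i, Filter.Tendsto (fun j => tApply (Bs j) (xs j) i) Filter.atTop
      (nhds (tApply A x i)) := fun i => ((continuous_apply i).tendsto _).comp htA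
  have hxi : ∀ i, Filter.Tendsto (fun j => xs j i) Filter.atTop (nhds (x i)) :=
    fun i => ((continuous_apply i).tendsto _).comp hx
  have hbi : ∀ i, Filter.Tendsto (fun j => bs j i) Filter.atTop (nhds (a i)) :=
    fun i => ((continuous_apply i).tendsto _).comp hb
  rw [mem_Sol]
  refine ⟨fun i => ge_of_tendsto' (hxi i) (fun j => (mem_Sol.mp (hsol j)).1 i),
    fun i => ge_of_tendsto' ((hti i).add (hbi i)) (fun j => (mem_Sol.mp (hsol j)).2.1 i), ?_⟩
  have hsum : Filter.Tendsto (fun j => ∑ i, xs j i * (tApply (Bs j) (xs j) i + bs j i))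
      Filter.atTop (nhds (∑ i, x i * (tApply A x i + a i))) :=
    tendsto_finset_sum _ fun i _ => (hxi i).mul ((hti i).add (hbi i))
  have heq : (fun j => ∑ i, xs j i * (tApply (Bs j) (xs j) i + bs j i)) = fun _ => (0:ℝ) :=
    funext fun j => (mem_Sol.mp (hsol j)).2.2
  rw [heq] at hsum
  exact tendsto_nhds_unique hsum tendsto_const_nhds

lemma zero_mem_Sol {n k : ℕ} (hk : k ≠ 0) (A : Fin n → (Fin k → Fin n) → ℝ)
    {a : Fin n → ℝ} (ha : ∀ i, 0 ≤ a i) : (0 : Fin n → ℝ) ∈ Sol A a := by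
  rw [mem_Sol]
  refine ⟨fun i => le_refl 0, fun i => ?_, ?_⟩
  · rw [tApply_zero hk]
    simpa using ha i
  · simp

lemma backward {n k : ℕ} (hk : k ≠ 0) {A : Fin n → (Fin k → Fin n) → ℝ}
    (H : ∀ a : Fin n → ℝ, (Sol A a).Nonempty →
      ∀ V' : Set (Fin n → ℝ), IsOpen V' → Sol A a ⊆ V' →
        ∃ U : Set ((Fin n → (Fin k → Fin n) → ℝ) × (Fin n → ℝ)), IsOpen U ∧ (A, a) ∈ U ∧
          ∀ p ∈ U, Sol p.1 p.2 ⊆ V') :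
    Sol A 0 = {0} := by
  refine Set.eq_singleton_iff_unique_mem.mpr
    ⟨zero_mem_Sol hk A (fun i => le_refl 0), fun xbar hxbar => ?_⟩
  by_contra hxne
  obtain ⟨hx1, hx2, hx3⟩ := mem_Sol.mp hxbar
  obtain ⟨j₀, hj₀⟩ := Function.ne_iff.mp hxne
  have hj₀pos : 0 < xbar j₀ := lt_of_le_of_ne (hx1 j₀) (by simpa using (Ne.symm hj₀))
  -- componentwise complementarity
  have hcomp : ∀ i, xbar i * tApply A xbar i = 0 := by
    have h := (Finset.sum_eq_zero_iff_of_nonneg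
      (fun i _ => mul_nonneg (hx1 i) (hx2 i))).mp hx3
    intro i
    have := h i (Finset.mem_univ i)
    simpa using this
  have hAxbar : ∀ i, xbar i ≠ 0 → tApply A xbar i = 0 := by
    intro i hi
    rcases mul_eq_zero.mp (hcomp i) with h | h
    · exact absurd h hi
    · exact h
  have hA0 : ∀ i, 0 ≤ tApply A xbar i := by
    intro i
    simpa using hx2 i
  -- the vector of all ones
  set a : Fin n → ℝ := fun _ => 1 with ha
  have ha0 : (0 : Fin n → ℝ) ∈ Sol A a := zero_mem_Sol hk A (fun i => zero_le_one)
  -- closed set S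
  set S : Set (Fin n → ℝ) := {y | xbar j₀ ≤ y j₀ ∧ y = (y j₀ / xbar j₀) • xbar} with hS
  have hSclosed : IsClosed S := by
    have hS1 : IsClosed {y : Fin n → ℝ | xbar j₀ ≤ y j₀} :=
      isClosed_le continuous_const (continuous_apply j₀)
    have hS2 : IsClosed {y : Fin n → ℝ | y = (y j₀ / xbar j₀) • xbar} :=
      isClosed_eq continuous_id
        (by fun_prop)
    exact hS1.inter hS2
  have hVsub : Sol A a ⊆ Sᶜ := by
    intro y hy hyS
    obtain ⟨hyt, hyeq⟩ := hyS
    set t : ℝ := y j₀ / xbar j₀ with htdef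
    have ht1 : 1 ≤ t := (one_le_div hj₀pos).mpr hyt
    have ht0 : 0 < t := lt_of_lt_of_le zero_lt_one ht1
    obtain ⟨hy1, hy2, hy3⟩ := mem_Sol.mp hy
    have hterm : ∀ i, y i * (tApply A y i + a i) = t * xbar i := by
      intro i
      have hyi : y i = t * xbar i := by
        conv_lhs => rw [hyeq]
        simp [Pi.smul_apply, smul_eq_mul]
      have htap : tApply A y i = t ^ k * tApply A xbar i := by
        conv_lhs => rw [hyeq]
        rw [tApply_smul]
        simp [Pi.smul_apply, smul_eq_mul]
      rw [hyi, htap, ha]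
      linear_combination (t * t ^ k) * hcomp i
    have hsum : ∑ i, y i * (tApply A y i + a i) = t * ∑ i, xbar i := by
      rw [Finset.sum_congr rfl fun i _ => hterm i, ← Finset.mul_sum]
    have hpos : 0 < t * ∑ i, xbar i := by
      have : 0 < ∑ i, xbar i :=
        lt_of_lt_of_le hj₀pos (Finset.single_le_sum (fun i _ => hx1 i) (Finset.mem_univ j₀))
      positivity
    rw [hy3] at hsum
    linarith
  obtain ⟨U, hUopen, hAU, hU⟩ := H a ⟨0, ha0⟩ Sᶜ hSclosed.isOpen_compl hVsub
  -- the perturbation tensor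
  set c : Fin n → ℝ := fun i => if xbar i = 0 then 0 else -1 with hc
  set C : Fin n → (Fin k → Fin n) → ℝ :=
    fun i j => if j = (fun _ => j₀) then c i / xbar j₀ ^ k else 0 with hC
  have hCxbar : tApply C xbar = c := by
    funext i
    show ∑ j : Fin k → Fin n, C i j * ∏ l : Fin k, xbar (j l) = c i
    have hterm : ∀ j : Fin k → Fin n, C i j * ∏ l : Fin k, xbar (j l)
        = if j = (fun _ => j₀) then (c i / xbar j₀ ^ k) * ∏ l : Fin k, xbar j₀ else 0 := by
      intro j
      by_cases h : j = (fun _ => j₀)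
      · subst h
        simp [hC]
      · simp [hC, h]
    rw [Finset.sum_congr rfl fun j _ => hterm j, Finset.sum_ite_eq' Finset.univ]
    simp only [Finset.mem_univ, if_true]
    rw [Finset.prod_const, Finset.card_univ, Fintype.card_fin,
      div_mul_cancel₀ _ (pow_ne_zero k (ne_of_gt hj₀pos))]
  -- continuity in ε
  have hf : Continuous fun ε : ℝ =>
      ((fun i j => A i j + ε * C i j, a) : (Fin n → (Fin k → Fin n) → ℝ) × (Fin n → ℝ)) := by
    refine Continuous.prodMk ?_ continuous_const
    refine continuous_pi fun i => continuous_pi fun j => ?_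
    exact continuous_const.add (continuous_id.mul continuous_const)
  have hf0 : ((fun i j => A i j + (0:ℝ) * C i j, a) :
      (Fin n → (Fin k → Fin n) → ℝ) × (Fin n → ℝ)) = (A, a) := by
    simp
  have hpre : IsOpen ((fun ε : ℝ =>
      ((fun i j => A i j + ε * C i j, a) : (Fin n → (Fin k → Fin n) → ℝ) × (Fin n → ℝ)))
      ⁻¹' U) := hUopen.preimage hf
  have h0pre : (0:ℝ) ∈ ((fun ε : ℝ =>
      ((fun i j => A i j + ε * C i j, a) : (Fin n → (Fin k → Fin n) → ℝ) × (Fin n → ℝ)))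
      ⁻¹' U) := by
    simp only [Set.mem_preimage, hf0]
    exact hAU
  obtain ⟨δ, hδpos, hδ⟩ := Metric.isOpen_iff.mp hpre 0 h0pre
  -- choose t large
  set t : ℝ := max 1 (2 / δ) with htdef
  have ht1 : (1:ℝ) ≤ t := le_max_left _ _
  have ht0 : (0:ℝ) < t := lt_of_lt_of_le zero_lt_one ht1
  set ε : ℝ := (t ^ k)⁻¹ with hεdef
  have htk1 : (1:ℝ) ≤ t ^ k := one_le_pow₀ ht1
  have hεpos : 0 < ε := by positivity
  have hεδ : ε < δ := by
    have h2δ : 2 / δ ≤ t := le_max_right _ _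
    have h2δ' : 2 / δ ≤ t ^ k := le_trans h2δ (le_self_pow₀ ht1 hk)
    have : ε ≤ δ / 2 := by
      rw [hεdef, ← inv_div]
      exact inv_anti₀ (by positivity) h2δ'
    linarith
  have hεU : ((fun i j => A i j + ε * C i j, a) :
      (Fin n → (Fin k → Fin n) → ℝ) × (Fin n → ℝ)) ∈ U := by
    apply hδ
    simp [Real.dist_eq, abs_of_pos hεpos, hεδ]
  have hεt : ε * t ^ k = 1 := inv_mul_cancel₀ (by positivity)
  -- the large solution z = t • xbar
  set z : Fin n → ℝ := t • xbar with hz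
  have hzap : ∀ i, tApply (fun i j => A i j + ε * C i j) z i + a i
      = t ^ k * tApply A xbar i + (c i + 1) := by
    intro i
    rw [tApply_add_smul]
    show tApply A z i + ε * tApply C z i + a i = _
    rw [hz, tApply_smul, tApply_smul, hCxbar]
    simp only [Pi.smul_apply, smul_eq_mul, ha]
    have : ε * (t ^ k * c i) = c i := by rw [← mul_assoc, hεt, one_mul]
    rw [this]
    ring
  have hzsol : z ∈ Sol (fun i j => A i j + ε * C i j) a := by
    rw [mem_Sol]
    refine ⟨fun i => mul_nonneg (le_of_lt ht0) (hx1 i), fun i => ?_, ?_⟩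
    · rw [hzap i]
      by_cases hi : xbar i = 0
      · have : c i = 0 := by simp [hc, hi]
        rw [this]
        have := hA0 i
        positivity
      · have hci : c i = -1 := by simp [hc, hi]
        rw [hci, hAxbar i hi]
        norm_num
    · apply Finset.sum_eq_zero
      intro i _
      by_cases hi : xbar i = 0
      · show z i * _ = 0
        rw [hz]
        simp [Pi.smul_apply, hi]
      · rw [hzap i]
        have hci : c i = -1 := by simp [hc, hi]
        rw [hci, hAxbar i hi]
        norm_num
  have hzV : z ∈ Sᶜ := hU _ hεU hzsol
  apply hzV
  constructor
  · show xbar j₀ ≤ z j₀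
    rw [hz]
    simp only [Pi.smul_apply, smul_eq_mul]
    nlinarith
  · show z = (z j₀ / xbar j₀) • xbar
    have : z j₀ / xbar j₀ = t := by
      rw [hz]
      simp only [Pi.smul_apply, smul_eq_mul]
      field_simp
    rw [this, hz]

lemma forward {n k : ℕ} (hk : k ≠ 0) {A : Fin n → (Fin k → Fin n) → ℝ}
    (hR0 : Sol A 0 = {0}) (a : Fin n → ℝ) (V' : Set (Fin n → ℝ)) (hVopen : IsOpen V')
    (hVsub : Sol A a ⊆ V') :
    ∃ U : Set ((Fin n → (Fin k → Fin n) → ℝ) × (Fin n → ℝ)), IsOpen U ∧ (A, a) ∈ U ∧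
      ∀ p ∈ U, Sol p.1 p.2 ⊆ V' := by
  by_contra hcon
  push_neg at hcon
  have key : ∀ j : ℕ, ∃ p : (Fin n → (Fin k → Fin n) → ℝ) × (Fin n → ℝ),
      dist p (A, a) < 1 / ((j : ℝ) + 1) ∧ ∃ x, x ∈ Sol p.1 p.2 ∧ x ∉ V' := by
    intro j
    obtain ⟨p, hpU, hns⟩ := hcon (Metric.ball (A, a) (1 / ((j : ℝ) + 1))) Metric.isOpen_ball
      (Metric.mem_ball_self (by positivity))
    obtain ⟨x, hxs, hxV⟩ := Set.not_subset.mp hns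
    exact ⟨p, by simpa [Metric.mem_ball] using hpU, x, hxs, hxV⟩
  choose p hp x hx hxV using key
  have hp_tendsto : Filter.Tendsto p Filter.atTop (nhds (A, a)) := by
    rw [tendsto_iff_dist_tendsto_zero]
    exact squeeze_zero (fun j => dist_nonneg) (fun j => (hp j).le)
      tendsto_one_div_add_atTop_nhds_zero_nat
  by_cases hbdd : ∃ R : ℝ, ∃ᶠ j in Filter.atTop, ‖x j‖ ≤ R
  · obtain ⟨R, hR⟩ := hbdd
    obtain ⟨φ, hφmono, hφ⟩ := Filter.extraction_of_frequently_atTop hR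
    have hxball : ∀ j, x (φ j) ∈ Metric.closedBall (0 : Fin n → ℝ) R := by
      intro j
      simpa [Metric.mem_closedBall, dist_zero_right] using hφ j
    obtain ⟨xbar, _, ψ, hψmono, hψlim⟩ :=
      (isCompact_closedBall (0 : Fin n → ℝ) R).tendsto_subseq hxball
    have hq : Filter.Tendsto (fun j => φ (ψ j)) Filter.atTop Filter.atTop :=
      (hφmono.comp hψmono).tendsto_atTop
    have hpq : Filter.Tendsto (fun j => p (φ (ψ j))) Filter.atTop (nhds (A, a)) :=
      hp_tendsto.comp hq
    have hBq : Filter.Tendsto (fun j => (p (φ (ψ j))).1) Filter.atTop (nhds A) :=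
      (continuous_fst.tendsto _).comp hpq
    have hbq : Filter.Tendsto (fun j => (p (φ (ψ j))).2) Filter.atTop (nhds a) :=
      (continuous_snd.tendsto _).comp hpq
    have hxq : Filter.Tendsto (fun j => x (φ (ψ j))) Filter.atTop (nhds xbar) := hψlim
    have hxbar : xbar ∈ Sol A a := Sol_limit hBq hbq hxq (fun j => hx (φ (ψ j)))
    have hev : ∀ᶠ j in Filter.atTop, x (φ (ψ j)) ∈ V' :=
      hxq.eventually (hVopen.mem_nhds (hVsub hxbar))
    obtain ⟨j, hj⟩ := hev.exists
    exact hxV (φ (ψ j)) hj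
  · push_neg at hbdd
    have hinf : Filter.Tendsto (fun j => ‖x j‖) Filter.atTop Filter.atTop := by
      rw [Filter.tendsto_atTop]
      intro R
      have h1 := hbdd R
      exact h1.mono fun j hj => le_of_lt hj
    obtain ⟨N, hN⟩ := Filter.eventually_atTop.mp (Filter.tendsto_atTop.mp hinf 1)
    set y : ℕ → (Fin n → ℝ) := fun j => ‖x (j + N)‖⁻¹ • x (j + N) with hy
    have hynorm : ∀ j, ‖y j‖ = 1 := by
      intro j
      have h1 : (1:ℝ) ≤ ‖x (j + N)‖ := hN (j + N) (by omega)
      rw [hy]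
      simp only [norm_smul, norm_inv, norm_norm]
      exact inv_mul_cancel₀ (by linarith)
    have hyball : ∀ j, y j ∈ Metric.closedBall (0 : Fin n → ℝ) 1 := by
      intro j
      simp [Metric.mem_closedBall, dist_zero_right, hynorm j]
    obtain ⟨ybar, _, ψ, hψmono, hψlim⟩ :=
      (isCompact_closedBall (0 : Fin n → ℝ) 1).tendsto_subseq hyball
    have hybarnorm : ‖ybar‖ = 1 := by
      have h1 : Filter.Tendsto (fun j => ‖y (ψ j)‖) Filter.atTop (nhds ‖ybar‖) :=
        (continuous_norm.tendsto _).comp hψlim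
      have h2 : (fun j => ‖y (ψ j)‖) = fun _ => (1:ℝ) := funext fun j => hynorm (ψ j)
      rw [h2] at h1
      exact tendsto_nhds_unique h1 tendsto_const_nhds
    have hq : Filter.Tendsto (fun j => ψ j + N) Filter.atTop Filter.atTop :=
      Filter.tendsto_atTop_mono (fun j => Nat.le_add_right (ψ j) N) hψmono.tendsto_atTop
    have hpq : Filter.Tendsto (fun j => p (ψ j + N)) Filter.atTop (nhds (A, a)) :=
      hp_tendsto.comp hq
    have hBq : Filter.Tendsto (fun j => (p (ψ j + N)).1) Filter.atTop (nhds A) :=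
      (continuous_fst.tendsto _).comp hpq
    have hbq : Filter.Tendsto (fun j => (p (ψ j + N)).2) Filter.atTop (nhds a) :=
      (continuous_snd.tendsto _).comp hpq
    have hεq : Filter.Tendsto (fun j => ‖x (ψ j + N)‖⁻¹) Filter.atTop (nhds 0) :=
      (hinf.comp hq).inv_tendsto_atTop
    have hεkq : Filter.Tendsto (fun j => (‖x (ψ j + N)‖⁻¹) ^ k) Filter.atTop (nhds 0) := by
      have := hεq.pow k
      rwa [zero_pow hk] at this
    have hbsq : Filter.Tendsto (fun j => (‖x (ψ j + N)‖⁻¹) ^ k • (p (ψ j + N)).2)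
        Filter.atTop (nhds (0 : Fin n → ℝ)) := by
      have := hεkq.smul hbq
      rwa [zero_smul] at this
    have hsol : ∀ j, y (ψ j) ∈ Sol (p (ψ j + N)).1 ((‖x (ψ j + N)‖⁻¹) ^ k • (p (ψ j + N)).2) :=
      fun j => Sol_scale (hx (ψ j + N)) (inv_nonneg.mpr (norm_nonneg _))
    have hybarSol : ybar ∈ Sol A 0 := Sol_limit hBq hbsq hψlim hsol
    rw [hR0] at hybarSol
    rw [hybarSol] at hybarnorm
    simp at hybarnorm

/-- `A` is R₀ iff the solution map is upper semicontinuous at `(A,a)` for every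
`a` with `Sol(A,a) ≠ ∅`. -/
theorem stmt_13 (m n : ℕ) (hm : 2 ≤ m) (hn : 2 ≤ n) (A : Fin n → (Fin (m - 1) → Fin n) → ℝ) :
    IsR0 A ↔ ∀ a : Fin n → ℝ, (Sol A a).Nonempty →
      ∀ V' : Set (Fin n → ℝ), IsOpen V' → Sol A a ⊆ V' →
        ∃ U : Set ((Fin n → (Fin (m - 1) → Fin n) → ℝ) × (Fin n → ℝ)), IsOpen U ∧ (A, a) ∈ U ∧
          ∀ p ∈ U, Sol p.1 p.2 ⊆ V' := by
  have hk : m - 1 ≠ 0 := by omega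
  constructor
  · intro hR0 a _ V' hV hsub
    exact forward hk hR0 a V' hV hsub
  · intro H
    exact backward hk H
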